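/- Let Ω be a convex domain in ℝⁿ. Then for every x ∈ Ω and all real numbers R > r > 0, vol(B(x, r) ∩ Ω) / vol(B(x, R) ∩ Ω) ≥ (r/R)ⁿ; equivalently, Rⁿ · vol(B(x, r) ∩ Ω) ≥ rⁿ · vol(B(x, R) ∩ Ω). (Bishop–Gromov inequality for convex domains in Euclidean space.) -/

import Mathlib

open MeasureTheory Metric

/-! The homothety of center `x` and ratio `r / R` maps `B(x, R) ∩ Ω` into `B(x, r) ∩ Ω`, since `Ω`
is star-shaped about `x`, and it scales Lebesgue measure by `(r / R)ⁿ`. -/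

section StarConvex

variable {E : Type*} [NormedAddCommGroup E] [NormedSpace ℝ E] {s : Set E} {x : E}

theorem StarConvex.homothety_mem (hs : StarConvex ℝ x s) {y : E} (hy : y ∈ s) {c : ℝ}
    (hc₀ : 0 ≤ c) (hc₁ : c ≤ 1) : AffineMap.homothety x c y ∈ s := by
  rw [AffineMap.homothety_apply, vsub_eq_sub, vadd_eq_add, add_comm]
  exact hs.add_smul_sub_mem hy hc₀ hc₁

theorem StarConvex.image_homothety_ball_inter_subset (hs : StarConvex ℝ x s) {c R : ℝ}
    (hc₀ : 0 < c) (hc₁ : c ≤ 1) :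
    AffineMap.homothety x c '' (ball x R ∩ s) ⊆ ball x (c * R) ∩ s := by
  rintro _ ⟨y, ⟨hyR, hys⟩, rfl⟩
  refine ⟨?_, hs.homothety_mem hys hc₀.le hc₁⟩
  rw [mem_ball, dist_homothety_center, Real.norm_of_nonneg hc₀.le, dist_comm]
  exact mul_lt_mul_of_pos_left (mem_ball.mp hyR) hc₀

variable [FiniteDimensional ℝ E] [MeasurableSpace E] [BorelSpace E] (μ : Measure E)
  [μ.IsAddHaarMeasure]

theorem StarConvex.addHaar_ball_inter_mul_le (hs : StarConvex ℝ x s) {r R : ℝ} (hr : 0 < r)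
    (hrR : r ≤ R) :
    ENNReal.ofReal (r ^ Module.finrank ℝ E) * μ (ball x R ∩ s) ≤
      ENNReal.ofReal (R ^ Module.finrank ℝ E) * μ (ball x r ∩ s) := by
  set d := Module.finrank ℝ E
  have hR : 0 < R := hr.trans_le hrR
  have hscaled : ENNReal.ofReal ((r / R) ^ d) * μ (ball x R ∩ s) ≤ μ (ball x r ∩ s) := by
    have hsub := hs.image_homothety_ball_inter_subset (R := R) (div_pos hr hR)
      ((div_le_one hR).mpr hrR)
    rw [div_mul_cancel₀ r hR.ne'] at hsub
    calc ENNReal.ofReal ((r / R) ^ d) * μ (ball x R ∩ s)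
      _ = μ (AffineMap.homothety x (r / R) '' (ball x R ∩ s)) := by
        rw [Measure.addHaar_image_homothety, abs_of_nonneg (by positivity)]
      _ ≤ μ (ball x r ∩ s) := measure_mono hsub
  calc ENNReal.ofReal (r ^ d) * μ (ball x R ∩ s)
      = ENNReal.ofReal (R ^ d) * (ENNReal.ofReal ((r / R) ^ d) * μ (ball x R ∩ s)) := by
        rw [← mul_assoc, ← ENNReal.ofReal_mul (by positivity), ← mul_pow,
          mul_div_cancel₀ r hR.ne']
    _ ≤ ENNReal.ofReal (R ^ d) * μ (ball x r ∩ s) := by gcongr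

end StarConvex

theorem bishop_gromov_convex_general {n : ℕ} (Ω : Set (EuclideanSpace ℝ (Fin n)))
    (hΩconv : Convex ℝ Ω)
    (x : EuclideanSpace ℝ (Fin n)) (hx : x ∈ Ω) (r R : ℝ) (hr : 0 < r) (hrR : r < R) :
    ENNReal.ofReal (r ^ n) * volume (ball x R ∩ Ω) ≤
      ENNReal.ofReal (R ^ n) * volume (ball x r ∩ Ω) := by
  simpa only [finrank_euclideanSpace_fin] using
    (hΩconv.starConvex hx).addHaar_ball_inter_mul_le volume hr hrR.le

/-- **Bishop–Gromov inequality for convex domains in `ℝⁿ`.** For a convex domain `Ω ⊆ ℝⁿ`,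
any `x ∈ Ω` and any `R > r > 0`,
`vol(B(x,r) ∩ Ω) / vol(B(x,R) ∩ Ω) ≥ (r/R)ⁿ`, i.e.
`Rⁿ · vol(B(x,r) ∩ Ω) ≥ rⁿ · vol(B(x,R) ∩ Ω)`. -/
theorem bishop_gromov_convex {n : ℕ} (Ω : Set (EuclideanSpace ℝ (Fin n)))
    (hΩopen : IsOpen Ω) (hΩconv : Convex ℝ Ω) (hΩne : Ω.Nonempty)
    (x : EuclideanSpace ℝ (Fin n)) (hx : x ∈ Ω) (r R : ℝ) (hr : 0 < r) (hrR : r < R) :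
    ENNReal.ofReal (r ^ n) * volume (ball x R ∩ Ω) ≤
      ENNReal.ofReal (R ^ n) * volume (ball x r ∩ Ω) :=
  bishop_gromov_convex_general Ω hΩconv x hx r R hr hrR
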